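/- Let m, n be positive integers, λ_{ij} > 0 for 1 ≤ i ≤ m, 1 ≤ j ≤ n, let ℓ be a positive integer, θ_k ∈ (0,1) for 1 ≤ k ≤ ℓ with ∑_{k=1}^ℓ θ_k = 1, and y_k > 0 for 1 ≤ k ≤ ℓ; put s = ∑_{k=1}^ℓ θ_k y_k. For positive reals a_1,…,a_r define the multivariate beta function B(a_1,…,a_r) = ∏_{q=1}^r Γ(a_q) / Γ(∑_{q=1}^r a_q). Then, with N = 2mn − m − n, [∏_{i=1}^m B(λ_{i1}s, …, λ_{in}s) · ∏_{j=1}^n B(λ_{1j}s, …, λ_{mj}s)] / ∏_{k=1}^ℓ [∏_{i=1}^m B(λ_{i1}y_k, …, λ_{in}y_k) · ∏_{j=1}^n B(λ_{1j}y_k, …, λ_{mj}y_k)]^{θ_k} ≥ (∏_{k=1}^ℓ y_k^{θ_k})^N / s^N. -/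

import Mathlib

/-!
Put `L_a(t) = log Γ((∑ a) t + 1) - ∑_q log Γ(a_q t + 1)`. Since `Γ(x + 1) = x Γ(x)`,
`(r - 1) log t + log B(a t) = log (∑ a / ∏ a) - L_a(t)`, so after taking logarithms the theorem is
the sum over all rows and columns of the Jensen-type inequality `L_a(s) ≤ ∑ θ_k L_a(y_k)`.

Passing to the limit in the Bohr–Mollerup sequence `logGammaSeq` gives
`∑ θ_k log Γ(c y_k + 1) - log Γ(c s + 1) = ∑_m J((m + 1) / c)`, where
`J(v) = log (v + s) - ∑ θ_k log (v + y_k)` is nonnegative and decreasing on `(0, ∞)`.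
It remains to show `∑_q ∑_m J((m + 1) / a_q) ≤ ∑_m J((m + 1) / ∑ a)`: ranking the grid points
`(m + 1) / a_q` injectively, the point of rank `k` is at least `(k + 1) / ∑ a`, because at most
`∑_q ⌊a_q c⌋ ≤ c ∑ a` grid points are `≤ c`.
-/

open Finset

/-- The multivariate beta function `∏ Γ(a_q) / Γ(∑ a_q)` for real arguments. -/
noncomputable def multivariateBeta {r : ℕ} (a : Fin r → ℝ) : ℝ :=
  (∏ q, Real.Gamma (a q)) / Real.Gamma (∑ q, a q)

open Real Filter Topology

section JensenGap

variable {ι : Type*} [Fintype ι] {θ y : ι → ℝ}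

noncomputable def jensenGap (θ y : ι → ℝ) (v : ℝ) : ℝ :=
  log (v + ∑ k, θ k * y k) - ∑ k, θ k * log (v + y k)

theorem weighted_mean_pos (hθ : ∀ k, 0 ≤ θ k) (hθsum : ∑ k, θ k = 1) (hy : ∀ k, 0 < y k) :
    0 < ∑ k, θ k * y k := by
  obtain ⟨k, -, hk⟩ := exists_ne_zero_of_sum_ne_zero (hθsum ▸ one_ne_zero)
  exact sum_pos' (fun k _ => mul_nonneg (hθ k) (hy k).le)
    ⟨k, mem_univ _, mul_pos ((hθ k).lt_of_ne' hk) (hy k)⟩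

theorem sum_mul_add_eq (hθsum : ∑ k, θ k = 1) (v : ℝ) :
    ∑ k, θ k * (v + y k) = v + ∑ k, θ k * y k := by
  simp only [mul_add, sum_add_distrib, ← sum_mul, hθsum, one_mul]

theorem jensenGap_nonneg (hθ : ∀ k, 0 ≤ θ k) (hθsum : ∑ k, θ k = 1) (hy : ∀ k, 0 < y k)
    {v : ℝ} (hv : 0 ≤ v) : 0 ≤ jensenGap θ y v := by
  have := strictConcaveOn_log_Ioi.concaveOn.le_map_sum (t := univ) (w := θ)
    (p := fun k => v + y k) (fun k _ => hθ k) hθsum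
    (fun k _ => Set.mem_Ioi.mpr (add_pos_of_nonneg_of_pos hv (hy k)))
  simp only [smul_eq_mul, sum_mul_add_eq hθsum] at this
  exact sub_nonneg.mpr this

theorem antitoneOn_jensenGap (hθ : ∀ k, 0 ≤ θ k) (hθsum : ∑ k, θ k = 1)
    (hy : ∀ k, 0 < y k) : AntitoneOn (jensenGap θ y) (Set.Ioi 0) := by
  have hvy : ∀ v ∈ Set.Ioi (0 : ℝ), ∀ k, 0 < v + y k := fun v hv k => add_pos hv (hy k)
  have hvs : ∀ v ∈ Set.Ioi (0 : ℝ), 0 < v + ∑ k, θ k * y k := fun v hv =>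
    add_pos_of_pos_of_nonneg hv (sum_nonneg fun k _ => mul_nonneg (hθ k) (hy k).le)
  have hderiv : ∀ v ∈ Set.Ioi (0 : ℝ), HasDerivAt (jensenGap θ y)
      ((v + ∑ k, θ k * y k)⁻¹ - ∑ k, θ k * (v + y k)⁻¹) v := fun v hv => by
    have hlog : ∀ c, 0 < v + c → HasDerivAt (fun w => log (w + c)) (v + c)⁻¹ v :=
      fun c hc => by simpa using ((hasDerivAt_id v).add_const c).log hc.ne'
    exact (hlog _ (hvs v hv)).sub
      (HasDerivAt.fun_sum fun k _ => (hlog _ (hvy v hv k)).const_mul (θ k))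
  refine antitoneOn_of_hasDerivWithinAt_nonpos (convex_Ioi 0)
    (fun v hv => (hderiv v hv).continuousAt.continuousWithinAt)
    (fun v hv => (hderiv v (interior_subset hv)).hasDerivWithinAt) fun v hv => ?_
  rw [interior_Ioi] at hv
  have := (convexOn_zpow (-1)).map_sum_le (t := univ) (w := θ) (p := fun k => v + y k)
    (fun k _ => hθ k) hθsum (fun k _ => Set.mem_Ioi.mpr (hvy v hv k))
  simp only [zpow_neg_one, smul_eq_mul, sum_mul_add_eq hθsum] at this
  exact sub_nonpos.mpr this

theorem jensenGap_div {c : ℝ} (hc : 0 < c) (hθ : ∀ k, 0 ≤ θ k) (hθsum : ∑ k, θ k = 1)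
    (hy : ∀ k, 0 < y k) {u : ℝ} (hu : 0 < u) :
    jensenGap θ y (u / c) =
      log (c * ∑ k, θ k * y k + u) - ∑ k, θ k * log (c * y k + u) := by
  have hsplit : ∀ t, 0 ≤ t → log (c * t + u) = log c + log (u / c + t) := fun t ht => by
    rw [← log_mul hc.ne' (by positivity)]
    congr 1
    field_simp
    ring
  have hs : 0 ≤ ∑ k, θ k * y k := sum_nonneg fun k _ => mul_nonneg (hθ k) (hy k).le
  simp only [hsplit _ hs, hsplit _ (hy _).le, mul_add, sum_add_distrib, ← sum_mul, hθsum,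
    one_mul, jensenGap]
  ring

theorem sum_mul_logGammaSeq_sub_logGammaSeq (hθsum : ∑ k, θ k = 1) (x : ι → ℝ) (n : ℕ) :
    ∑ k, θ k * BohrMollerup.logGammaSeq (x k) n -
        BohrMollerup.logGammaSeq (∑ k, θ k * x k) n =
      ∑ m ∈ range (n + 1), (log (∑ k, θ k * x k + m) - ∑ k, θ k * log (x k + m)) := by
  simp only [BohrMollerup.logGammaSeq, mul_sub, mul_add, sum_sub_distrib, sum_add_distrib,
    ← mul_assoc, ← sum_mul, hθsum, mul_sum]
  rw [sum_comm]
  ring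

theorem hasSum_jensenGap {c : ℝ} (hc : 0 < c) (hθ : ∀ k, 0 ≤ θ k) (hθsum : ∑ k, θ k = 1)
    (hy : ∀ k, 0 < y k) :
    HasSum (fun m : ℕ => jensenGap θ y ((m + 1) / c))
      (∑ k, θ k * log (Gamma (c * y k + 1)) - log (Gamma (c * ∑ k, θ k * y k + 1))) := by
  have hs : 0 ≤ ∑ k, θ k * y k := sum_nonneg fun k _ => mul_nonneg (hθ k) (hy k).le
  have hmean : ∑ k, θ k * (c * y k + 1) = c * ∑ k, θ k * y k + 1 := by
    simp only [mul_add, sum_add_distrib, mul_one, hθsum, mul_left_comm _ c, ← mul_sum]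
  have hpartial : ∀ n : ℕ, ∑ m ∈ range (n + 1), jensenGap θ y ((m + 1) / c) =
      ∑ k, θ k * BohrMollerup.logGammaSeq (c * y k + 1) n -
        BohrMollerup.logGammaSeq (c * ∑ k, θ k * y k + 1) n := fun n => by
    rw [← hmean, sum_mul_logGammaSeq_sub_logGammaSeq hθsum, hmean]
    refine sum_congr rfl fun m _ => ?_
    rw [jensenGap_div hc hθ hθsum hy (Nat.cast_add_one_pos m)]
    simp only [add_assoc, add_comm (1 : ℝ)]
  rw [hasSum_iff_tendsto_nat_of_nonneg
    (fun m => jensenGap_nonneg hθ hθsum hy (by positivity)), ← tendsto_add_atTop_iff_nat 1]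
  simp only [hpartial]
  exact (tendsto_finsetSum _ fun k _ =>
    (BohrMollerup.tendsto_log_gamma (by positivity [hy k])).const_mul (θ k)).sub
    (BohrMollerup.tendsto_log_gamma (by positivity))

end JensenGap

theorem injective_card_filter_lt {α β : Type*} [LinearOrder β] {key : α → β}
    (hkey : Function.Injective key) {S : α → Finset α}
    (hS : ∀ p p', key p' ≤ key p → p' ∈ S p) :
    Function.Injective fun p => #{p' ∈ S p | key p' < key p} := by
  have hlt : ∀ p p', key p < key p' →
      #{p'' ∈ S p | key p'' < key p} < #{p'' ∈ S p' | key p'' < key p'} := by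
    refine fun p p' h => card_lt_card ((ssubset_iff_of_subset fun p'' hp'' => ?_).mpr ?_)
    · obtain ⟨-, hlt⟩ := mem_filter.mp hp''
      exact mem_filter.mpr ⟨hS _ _ (hlt.trans h).le, hlt.trans h⟩
    · exact ⟨p, mem_filter.mpr ⟨hS _ _ h.le, h⟩, fun hp => lt_irrefl _ (mem_filter.mp hp).2⟩
  intro p p' he
  by_contra hne
  rcases lt_or_gt_of_ne (hkey.ne hne) with h | h
  · exact (hlt _ _ h).ne he
  · exact (hlt _ _ h).ne' he

section Grid

variable {r : ℕ} {a : Fin r → ℝ}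

noncomputable def gridBelow (a : Fin r → ℝ) (c : ℝ) : Finset (Fin r × ℕ) :=
  univ.biUnion fun q => (range ⌊a q * c⌋₊).map (Function.Embedding.sectR q ℕ)

theorem mem_gridBelow (ha : ∀ q, 0 < a q) {c : ℝ} {p : Fin r × ℕ} :
    p ∈ gridBelow a c ↔ (p.2 + 1) / a p.1 ≤ c := by
  obtain ⟨q, m⟩ := p
  rw [div_le_iff₀ (ha q), mul_comm c, gridBelow]
  simp only [mem_biUnion, mem_univ, Finset.mem_map, mem_range, Function.Embedding.sectR_apply,
    Prod.mk.injEq, true_and]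
  rw [← Nat.cast_add_one, ← Nat.le_floor_iff' m.succ_ne_zero, Nat.succ_le_iff]
  constructor
  · rintro ⟨q, m, hm, rfl, rfl⟩
    exact hm
  · exact fun hm => ⟨q, m, hm, rfl, rfl⟩

theorem card_gridBelow_le (ha : ∀ q, 0 < a q) {c : ℝ} (hc : 0 ≤ c) :
    (#(gridBelow a c) : ℝ) ≤ (∑ q, a q) * c := by
  calc (#(gridBelow a c) : ℝ) ≤ ∑ q, (⌊a q * c⌋₊ : ℝ) := by
        exact_mod_cast card_biUnion_le.trans (by simp)
    _ ≤ ∑ q, a q * c := sum_le_sum fun q _ => Nat.floor_le (by positivity [ha q])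
    _ = (∑ q, a q) * c := (sum_mul ..).symm

theorem exists_injective_grid (ha : ∀ q, 0 < a q) :
    ∃ ι : Fin r × ℕ → ℕ, Function.Injective ι ∧
      ∀ p, (ι p + 1) / ∑ q, a q ≤ (p.2 + 1) / a p.1 := by
  set b : Fin r × ℕ → ℝ := fun p => (p.2 + 1) / a p.1
  set key : Fin r × ℕ → ℝ ×ₗ Fin r := fun p => toLex (b p, p.1)
  have hkey : Function.Injective key := fun p p' h => by
    obtain ⟨hb, hq⟩ := Prod.ext_iff.mp (toLex.injective h)
    obtain ⟨q, m⟩ := p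
    obtain ⟨q', m'⟩ := p'
    simp only [b] at hb hq
    subst hq
    rw [div_left_inj' (ha q).ne', add_left_inj, Nat.cast_inj] at hb
    rw [hb]
  have hS : ∀ p p', key p' ≤ key p → p' ∈ gridBelow a (b p) := fun p p' h =>
    (mem_gridBelow ha).mpr (Prod.Lex.toLex_le_toLex'.mp h).1
  refine ⟨fun p => #{p' ∈ gridBelow a (b p) | key p' < key p},
    injective_card_filter_lt hkey hS, fun p => ?_⟩
  have hA : 0 < ∑ q, a q := sum_pos (fun q _ => ha q) ⟨p.1, mem_univ _⟩
  have hnotMem : p ∉ {p' ∈ gridBelow a (b p) | key p' < key p} :=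
    fun hp => lt_irrefl _ (mem_filter.mp hp).2
  have hcard := card_le_card (insert_subset (hS p p le_rfl)
    (filter_subset (fun p' => key p' < key p) (gridBelow a (b p))))
  rw [card_insert_of_notMem hnotMem] at hcard
  rw [div_le_iff₀ hA, mul_comm]
  refine le_trans ?_ (card_gridBelow_le ha (c := b p) (by positivity [ha p.1]))
  exact_mod_cast hcard

theorem sum_tsum_le_tsum_of_antitoneOn {f : ℝ → ℝ} (hf : AntitoneOn f (Set.Ioi 0))
    (hf0 : ∀ x, 0 ≤ x → 0 ≤ f x) (ha : ∀ q, 0 < a q)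
    (hsum : Summable fun m : ℕ => f ((m + 1) / ∑ q, a q)) :
    ∑ q, ∑' m : ℕ, f ((m + 1) / a q) ≤ ∑' m : ℕ, f ((m + 1) / ∑ q, a q) := by
  obtain ⟨ι, hι, hle⟩ := exists_injective_grid ha
  have hA : 0 ≤ ∑ q, a q := sum_nonneg fun q _ => (ha q).le
  set g : Fin r × ℕ → ℝ := fun p => f ((p.2 + 1) / a p.1)
  have hg0 : ∀ p, 0 ≤ g p := fun p => hf0 _ (by positivity [ha p.1])
  have hg_le : ∀ p, g p ≤ f ((ι p + 1) / ∑ q, a q) := fun p => by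
    have hA' : 0 < ∑ q, a q := sum_pos (fun q _ => ha q) ⟨p.1, mem_univ _⟩
    exact hf (Set.mem_Ioi.mpr (by positivity)) (Set.mem_Ioi.mpr (by positivity [ha p.1]))
      (hle p)
  have hg : Summable g := (hsum.comp_injective hι).of_nonneg_of_le hg0 hg_le
  calc ∑ q, ∑' m : ℕ, f ((m + 1) / a q) = ∑' p, g p := by
        rw [hg.tsum_prod' fun q => hg.prod_factor q, tsum_fintype]
    _ ≤ ∑' p, f ((ι p + 1) / ∑ q, a q) := hg.tsum_le_tsum hg_le (hsum.comp_injective hι)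
    _ ≤ ∑' m : ℕ, f ((m + 1) / ∑ q, a q) :=
        tsum_comp_le_tsum_of_inj hsum (fun m => hf0 _ (by positivity)) hι

end Grid

section Beta

variable {ι : Type*} [Fintype ι] {θ y : ι → ℝ} {r : ℕ} {a : Fin r → ℝ}

theorem log_Gamma_sub_sum_log_Gamma_le (hr : 0 < r) (ha : ∀ q, 0 < a q)
    (hθ : ∀ k, 0 ≤ θ k) (hθsum : ∑ k, θ k = 1) (hy : ∀ k, 0 < y k) :
    log (Gamma ((∑ q, a q) * ∑ k, θ k * y k + 1)) -
        ∑ q, log (Gamma (a q * ∑ k, θ k * y k + 1)) ≤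
      ∑ k, θ k * (log (Gamma ((∑ q, a q) * y k + 1)) - ∑ q, log (Gamma (a q * y k + 1))) := by
  have hA : 0 < ∑ q, a q := sum_pos (fun q _ => ha q) ⟨⟨0, hr⟩, mem_univ _⟩
  have hgapA := hasSum_jensenGap hA hθ hθsum hy
  have hgap := sum_tsum_le_tsum_of_antitoneOn (antitoneOn_jensenGap hθ hθsum hy)
    (fun _ => jensenGap_nonneg hθ hθsum hy) ha hgapA.summable
  rw [hgapA.tsum_eq, sum_congr rfl fun q _ => (hasSum_jensenGap (ha q) hθ hθsum hy).tsum_eq]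
    at hgap
  simp only [mul_sub, sum_sub_distrib, mul_sum] at hgap ⊢
  rw [sum_comm] at hgap
  linarith

theorem log_Gamma_add_one {x : ℝ} (hx : 0 < x) :
    log (Gamma (x + 1)) = log x + log (Gamma x) := by
  rw [Gamma_add_one hx.ne', log_mul hx.ne' (Gamma_pos_of_pos hx).ne']

theorem multivariateBeta_pos (hr : 0 < r) (ha : ∀ q, 0 < a q) : 0 < multivariateBeta a :=
  div_pos (prod_pos fun q _ => Gamma_pos_of_pos (ha q))
    (Gamma_pos_of_pos (sum_pos (fun q _ => ha q) ⟨⟨0, hr⟩, mem_univ _⟩))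

theorem sub_one_mul_log_add_log_multivariateBeta (hr : 0 < r) (ha : ∀ q, 0 < a q) {t : ℝ}
    (ht : 0 < t) :
    ((r : ℝ) - 1) * log t + log (multivariateBeta fun q => a q * t) =
      log (∑ q, a q) - ∑ q, log (a q) -
        (log (Gamma ((∑ q, a q) * t + 1)) - ∑ q, log (Gamma (a q * t + 1))) := by
  have hA : 0 < ∑ q, a q := sum_pos (fun q _ => ha q) ⟨⟨0, hr⟩, mem_univ _⟩
  have hat : ∀ q, 0 < a q * t := fun q => mul_pos (ha q) ht
  rw [multivariateBeta, ← sum_mul,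
    log_div (prod_pos fun q _ => Gamma_pos_of_pos (hat q)).ne'
      (Gamma_pos_of_pos (mul_pos hA ht)).ne',
    log_prod fun q _ => (Gamma_pos_of_pos (hat q)).ne']
  simp only [log_Gamma_add_one (mul_pos hA ht), log_Gamma_add_one (hat _),
    log_mul hA.ne' ht.ne', log_mul (ha _).ne' ht.ne', sum_add_distrib, sum_const, card_univ,
    Fintype.card_fin, nsmul_eq_mul]
  ring

theorem sum_mul_log_multivariateBeta_le (hr : 0 < r) (ha : ∀ q, 0 < a q)
    (hθ : ∀ k, 0 ≤ θ k) (hθsum : ∑ k, θ k = 1) (hy : ∀ k, 0 < y k) :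
    ∑ k, θ k * (((r : ℝ) - 1) * log (y k) + log (multivariateBeta fun q => a q * y k)) ≤
      ((r : ℝ) - 1) * log (∑ k, θ k * y k) +
        log (multivariateBeta fun q => a q * ∑ k, θ k * y k) := by
  have hGamma := log_Gamma_sub_sum_log_Gamma_le hr ha hθ hθsum hy
  simp only [sub_one_mul_log_add_log_multivariateBeta hr ha (hy _),
    sub_one_mul_log_add_log_multivariateBeta hr ha (weighted_mean_pos hθ hθsum hy), mul_sub,
    sum_sub_distrib, ← sum_mul, hθsum, one_mul] at hGamma ⊢
  linarith

end Beta

theorem prod_rpow_rpow_div_le_of_sum_mul_log_le {ι : Type*} [Fintype ι] {θ y : ι → ℝ}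
    (hθ : ∀ k, 0 ≤ θ k) (hθsum : ∑ k, θ k = 1) (hy : ∀ k, 0 < y k) {P : ℝ → ℝ}
    (hP : ∀ t, 0 < t → 0 < P t) (N : ℝ)
    (h : ∑ k, θ k * (N * log (y k) + log (P (y k))) ≤
      N * log (∑ k, θ k * y k) + log (P (∑ k, θ k * y k))) :
    (∏ k, y k ^ θ k) ^ N / (∑ k, θ k * y k) ^ N ≤
      P (∑ k, θ k * y k) / ∏ k, P (y k) ^ θ k := by
  have hs := weighted_mean_pos hθ hθsum hy
  have hprod_pos : ∀ x : ι → ℝ, (∀ k, 0 < x k) → 0 < ∏ k, x k ^ θ k :=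
    fun x hx => prod_pos fun k _ => rpow_pos_of_pos (hx k) _
  have hlog_prod : ∀ x : ι → ℝ, (∀ k, 0 < x k) →
      log (∏ k, x k ^ θ k) = ∑ k, θ k * log (x k) := fun x hx => by
    rw [log_prod fun k _ => (rpow_pos_of_pos (hx k) _).ne']
    exact sum_congr rfl fun k _ => log_rpow (hx k) _
  have hPy : ∀ k, 0 < P (y k) := fun k => hP _ (hy k)
  have hyN := rpow_pos_of_pos (hprod_pos _ hy) N
  have hsN := rpow_pos_of_pos hs N
  rw [div_le_div_iff₀ hsN (hprod_pos _ hPy),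
    ← log_le_log_iff (mul_pos hyN (hprod_pos _ hPy)) (mul_pos (hP _ hs) hsN),
    log_mul hyN.ne' (hprod_pos _ hPy).ne', log_mul (hP _ hs).ne' hsN.ne',
    log_rpow (hprod_pos _ hy), log_rpow hs, hlog_prod _ hy, hlog_prod _ hPy]
  simp only [mul_add, sum_add_distrib, mul_left_comm (θ _) N, ← mul_sum] at h
  linarith

theorem multivariate_beta_log_convexity_inequality_general
    (m n ℓ : ℕ) (hm : 0 < m) (hn : 0 < n)
    (lam : Fin m → Fin n → ℝ) (hlam : ∀ i j, 0 < lam i j)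
    (θ : Fin ℓ → ℝ) (hθ : ∀ k, θ k ∈ Set.Ioo (0 : ℝ) 1) (hθsum : ∑ k, θ k = 1)
    (y : Fin ℓ → ℝ) (hy : ∀ k, 0 < y k)
    (s : ℝ) (hs : s = ∑ k, θ k * y k) :
    (∏ k : Fin ℓ, y k ^ θ k) ^ (2 * (m : ℝ) * n - m - n) /
        s ^ (2 * (m : ℝ) * n - m - n) ≤
      ((∏ i : Fin m, multivariateBeta (fun j : Fin n => lam i j * s)) *
          ∏ j : Fin n, multivariateBeta (fun i : Fin m => lam i j * s)) /
        ∏ k : Fin ℓ,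
          ((∏ i : Fin m, multivariateBeta (fun j : Fin n => lam i j * y k)) *
            ∏ j : Fin n, multivariateBeta (fun i : Fin m => lam i j * y k)) ^ θ k := by
  subst hs
  have hθ0 : ∀ k, 0 ≤ θ k := fun k => (hθ k).1.le
  have hrow : ∀ i t, 0 < t → 0 < multivariateBeta (fun j : Fin n => lam i j * t) :=
    fun i t ht => multivariateBeta_pos hn fun j => mul_pos (hlam i j) ht
  have hcol : ∀ j t, 0 < t → 0 < multivariateBeta (fun i : Fin m => lam i j * t) :=
    fun j t ht => multivariateBeta_pos hm fun i => mul_pos (hlam i j) ht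
  -- `2mn - m - n = m (n - 1) + n (m - 1)` distributes the power of `t` over rows and columns
  have hsplit : ∀ t, 0 < t → (2 * (m : ℝ) * n - m - n) * log t +
      log ((∏ i : Fin m, multivariateBeta (fun j : Fin n => lam i j * t)) *
          ∏ j : Fin n, multivariateBeta (fun i : Fin m => lam i j * t)) =
      ∑ i, (((n : ℝ) - 1) * log t + log (multivariateBeta (fun j : Fin n => lam i j * t))) +
        ∑ j, (((m : ℝ) - 1) * log t + log (multivariateBeta (fun i : Fin m => lam i j * t))) :=
    fun t ht => by
      rw [log_mul (prod_pos fun i _ => hrow i t ht).ne' (prod_pos fun j _ => hcol j t ht).ne',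
        log_prod fun i _ => (hrow i t ht).ne', log_prod fun j _ => (hcol j t ht).ne']
      simp only [sum_add_distrib, sum_const, card_univ, Fintype.card_fin, nsmul_eq_mul]
      ring
  refine prod_rpow_rpow_div_le_of_sum_mul_log_le hθ0 hθsum hy
    (fun t ht => mul_pos (prod_pos fun i _ => hrow i t ht) (prod_pos fun j _ => hcol j t ht)) _ ?_
  rw [hsplit _ (weighted_mean_pos hθ0 hθsum hy), sum_congr rfl fun k _ => by rw [hsplit _ (hy k)]]
  have hrows := sum_le_sum fun i (_ : i ∈ univ) =>
    sum_mul_log_multivariateBeta_le hn (fun j => hlam i j) hθ0 hθsum hy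
  have hcols := sum_le_sum fun j (_ : j ∈ univ) =>
    sum_mul_log_multivariateBeta_le hm (fun i => hlam i j) hθ0 hθsum hy
  rw [sum_comm] at hrows hcols
  simpa only [mul_add, mul_sum, sum_add_distrib] using add_le_add hrows hcols

theorem multivariate_beta_log_convexity_inequality
    (m n ℓ : ℕ) (hm : 0 < m) (hn : 0 < n) (hℓ : 0 < ℓ)
    (lam : Fin m → Fin n → ℝ) (hlam : ∀ i j, 0 < lam i j)
    (θ : Fin ℓ → ℝ) (hθ : ∀ k, θ k ∈ Set.Ioo (0 : ℝ) 1) (hθsum : ∑ k, θ k = 1)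
    (y : Fin ℓ → ℝ) (hy : ∀ k, 0 < y k)
    (s : ℝ) (hs : s = ∑ k, θ k * y k) :
    (∏ k : Fin ℓ, y k ^ θ k) ^ (2 * (m : ℝ) * n - m - n) /
        s ^ (2 * (m : ℝ) * n - m - n) ≤
      ((∏ i : Fin m, multivariateBeta (fun j : Fin n => lam i j * s)) *
          ∏ j : Fin n, multivariateBeta (fun i : Fin m => lam i j * s)) /
        ∏ k : Fin ℓ,
          ((∏ i : Fin m, multivariateBeta (fun j : Fin n => lam i j * y k)) *
            ∏ j : Fin n, multivariateBeta (fun i : Fin m => lam i j * y k)) ^ θ k :=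
  multivariate_beta_log_convexity_inequality_general m n ℓ hm hn lam hlam θ hθ hθsum y hy s hs
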